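/- Let A be a Banach algebra, B a Banach A-bimodule, and n ≥ 1. If H¹(A, B⁽ⁿ⁺²⁾) = 0, then H¹(A, B⁽ⁿ⁾) = 0. That is, if every continuous derivation from A into the (n+2)-nd dual of B is inner, then every continuous derivation from A into the n-th dual of B is inner. -/

import Mathlib

/-! For `n ≥ 1` write `B⁽ⁿ⁾ = M*`. The canonical embedding `ι : M* → M***` and the adjoint
`P : M*** → M*` of the embedding `M → M**` are bimodule maps with `P ∘ ι = id`. If `D` is a
derivation into `M*`, then `ι ∘ D` is a derivation into `M***`, hence implemented by some `F`,
and applying `P` shows that `D` is implemented by `P F`. -/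

open NormedSpace ContinuousLinearMap

set_option maxSynthPendingDepth 2

noncomputable section

section Core

variable (X Y Z : Type*)
  [NormedAddCommGroup X] [NormedSpace ℝ X]
  [NormedAddCommGroup Y] [NormedSpace ℝ Y]
  [NormedAddCommGroup Z] [NormedSpace ℝ Z]

/-- The dual (adjoint) map of a continuous linear map. -/
def dualMapCLM (T : X →L[ℝ] Y) : StrongDual ℝ Y →L[ℝ] StrongDual ℝ X :=
  (ContinuousLinearMap.compSL X Y ℝ (RingHom.id ℝ) (RingHom.id ℝ)).flip T

variable {X Y Z}

/-- The adjoint of a continuous bilinear map `m : X × Y → Z`, as a bilinear map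
`Z* × X → Y*`, `⟨adjBil m z' x, y⟩ = ⟨z', m x y⟩`. -/
def adjBil (m : X →L[ℝ] Y →L[ℝ] Z) : StrongDual ℝ Z →L[ℝ] X →L[ℝ] StrongDual ℝ Y :=
  ((ContinuousLinearMap.compSL X (Y →L[ℝ] Z) (StrongDual ℝ Y) (RingHom.id ℝ) (RingHom.id ℝ)).flip m).comp
    (ContinuousLinearMap.compSL Y Z ℝ (RingHom.id ℝ) (RingHom.id ℝ))

/-- The first Arens extension of a continuous bilinear map `X × Y → Z`
to the biduals, `X** × Y** → Z**`. -/
def arensExt (m : X →L[ℝ] Y →L[ℝ] Z) :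
    StrongDual ℝ (StrongDual ℝ X) →L[ℝ] StrongDual ℝ (StrongDual ℝ Y) →L[ℝ] StrongDual ℝ (StrongDual ℝ Z) :=
  adjBil (adjBil (adjBil m))

variable (E : Type*) [NormedAddCommGroup E] [NormedSpace ℝ E]

/-- The weak-* topology on the bidual `E**`, i.e. the topology of pointwise
convergence on `E*`. -/
def weakStarTop : TopologicalSpace (StrongDual ℝ (StrongDual ℝ E)) :=
  ⨅ f : StrongDual ℝ E, TopologicalSpace.induced (fun F => F f) inferInstance

/-- The weak topology on the bidual `E**`, i.e. the topology of pointwise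
convergence on `E***`. -/
def weakTop : TopologicalSpace (StrongDual ℝ (StrongDual ℝ E)) :=
  ⨅ Φ : StrongDual ℝ (StrongDual ℝ (StrongDual ℝ E)), TopologicalSpace.induced (fun F => Φ F) inferInstance

end Core

section Algebra

variable (A : Type*) [NonUnitalNormedRing A] [NormedSpace ℝ A]
  [IsScalarTower ℝ A A] [SMulCommClass ℝ A A]

/-- The first Arens product on the bidual of a Banach algebra. -/
def arens1 : StrongDual ℝ (StrongDual ℝ A) →L[ℝ] StrongDual ℝ (StrongDual ℝ A) →L[ℝ] StrongDual ℝ (StrongDual ℝ A) :=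
  arensExt (ContinuousLinearMap.mul ℝ A)

/-- The second Arens product on the bidual of a Banach algebra. -/
def arens2 (F G : StrongDual ℝ (StrongDual ℝ A)) : StrongDual ℝ (StrongDual ℝ A) :=
  arensExt ((ContinuousLinearMap.mul ℝ A).flip) G F

/-- The weak left topological center of `A**`: those `F` such that
`G ↦ F □ G` is weak-*-to-weak continuous. -/
def weakLeftCenter : Set (StrongDual ℝ (StrongDual ℝ A)) :=
  { F | ∀ Φ : StrongDual ℝ (StrongDual ℝ (StrongDual ℝ A)),
      @Continuous _ _ (weakStarTop A) _ fun G => Φ (arens1 A F G) }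

/-- The left topological center of `A**`: those `F` such that
`G ↦ F □ G` is weak-*-to-weak-* continuous. -/
def leftCenter : Set (StrongDual ℝ (StrongDual ℝ A)) :=
  { F | ∀ f : StrongDual ℝ A,
      @Continuous _ _ (weakStarTop A) _ fun G => arens1 A F G f }

end Algebra


universe u v

/-- A Banach bimodule over `A`: a normed space together with continuous bilinear
left and right module actions. -/
structure BBim (A : Type u) [NonUnitalNormedRing A] [NormedSpace ℝ A]
    [IsScalarTower ℝ A A] [SMulCommClass ℝ A A] : Type (max u (v + 1)) where
  X : Type v
  [grp : NormedAddCommGroup X]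
  [mod : NormedSpace ℝ X]
  l : A →L[ℝ] X →L[ℝ] X
  r : X →L[ℝ] A →L[ℝ] X

attribute [instance] BBim.grp BBim.mod

variable {A : Type u} [NonUnitalNormedRing A] [NormedSpace ℝ A]
  [IsScalarTower ℝ A A] [SMulCommClass ℝ A A]

/-- The dual of a Banach bimodule, with the dual module actions
`⟨a ⋅ φ, x⟩ = ⟨φ, x ⋅ a⟩` and `⟨φ ⋅ a, x⟩ = ⟨φ, a ⋅ x⟩`. -/
def BBim.dual (M : BBim.{u, v} A) : BBim.{u, v} A where
  X := StrongDual ℝ M.X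
  l := ((ContinuousLinearMap.compSL M.X M.X ℝ (RingHom.id ℝ) (RingHom.id ℝ)).flip).comp M.r.flip
  r := (((ContinuousLinearMap.compSL M.X M.X ℝ (RingHom.id ℝ) (RingHom.id ℝ)).flip).comp M.l).flip

/-- The `n`-th iterated dual `B⁽ⁿ⁾` of a Banach bimodule. -/
def BBim.iter (M : BBim.{u, v} A) : ℕ → BBim.{u, v} A
  | 0 => M
  | n + 1 => (M.iter n).dual

/-- `D : A → X` is a derivation into the bimodule `M`. -/
def BBim.IsDer (M : BBim.{u, v} A) (D : A →L[ℝ] M.X) : Prop :=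
  ∀ a b : A, D (a * b) = M.l a (D b) + M.r (D a) b

/-- `D : A → X` is an inner derivation. -/
def BBim.IsInner (M : BBim.{u, v} A) (D : A →L[ℝ] M.X) : Prop :=
  ∃ x : M.X, ∀ a : A, D a = M.l a x - M.r x a

/-- `H¹(A, X) = 0`: every continuous derivation into `M` is inner. -/
def BBim.H1Zero (M : BBim.{u, v} A) : Prop :=
  ∀ D : A →L[ℝ] M.X, M.IsDer D → M.IsInner D

universe w

structure BBim.IsHom (M : BBim.{u, v} A) (N : BBim.{u, w} A) (T : M.X →L[ℝ] N.X) : Prop where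
  map_l : ∀ a x, T (M.l a x) = N.l a (T x)
  map_r : ∀ x a, T (M.r x a) = N.r (T x) a

namespace BBim

variable {M : BBim.{u, v} A} {N : BBim.{u, w} A} {T : M.X →L[ℝ] N.X}

theorem IsDer.comp {D : A →L[ℝ] M.X} (hD : M.IsDer D) (hT : M.IsHom N T) :
    N.IsDer (T.comp D) := fun a b => by
  simp only [ContinuousLinearMap.comp_apply, hD a b, map_add, hT.map_l, hT.map_r]

theorem IsInner.comp {D : A →L[ℝ] M.X} (hD : M.IsInner D) (hT : M.IsHom N T) :
    N.IsInner (T.comp D) := by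
  obtain ⟨x, hx⟩ := hD
  exact ⟨T x, fun a => by rw [ContinuousLinearMap.comp_apply, hx a, map_sub, hT.map_l, hT.map_r]⟩

theorem H1Zero.of_retract (hN : N.H1Zero) {P : N.X →L[ℝ] M.X} (hT : M.IsHom N T)
    (hP : N.IsHom M P) (hPT : P.comp T = ContinuousLinearMap.id ℝ M.X) : M.H1Zero := by
  intro D hD
  have hPTD : P.comp (T.comp D) = D := by
    rw [← ContinuousLinearMap.comp_assoc, hPT, ContinuousLinearMap.id_comp]
  simpa only [hPTD] using (hN _ (hD.comp hT)).comp hP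

theorem isHom_inclusionInDoubleDual (M : BBim.{u, v} A) :
    M.IsHom M.dual.dual (inclusionInDoubleDual ℝ M.X) :=
  ⟨fun _ _ => rfl, fun _ _ => rfl⟩

theorem IsHom.dualMapCLM (hT : M.IsHom N T) : N.dual.IsHom M.dual (dualMapCLM M.X N.X T) where
  map_l a (φ : StrongDual ℝ N.X) := ContinuousLinearMap.ext fun x => congrArg φ (hT.map_r x a).symm
  map_r (φ : StrongDual ℝ N.X) a := ContinuousLinearMap.ext fun x => congrArg φ (hT.map_l a x).symm

theorem H1Zero.of_dual_dual_dual (h : M.dual.dual.dual.H1Zero) : M.dual.H1Zero :=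
  h.of_retract (isHom_inclusionInDoubleDual M.dual)
    (isHom_inclusionInDoubleDual M).dualMapCLM rfl

end BBim

theorem stmt12_general (A : Type u) [NonUnitalNormedRing A] [NormedSpace ℝ A]
    [IsScalarTower ℝ A A] [SMulCommClass ℝ A A]
    (B : Type v) [NormedAddCommGroup B] [NormedSpace ℝ B]
    (l : A →L[ℝ] B →L[ℝ] B) (r : B →L[ℝ] A →L[ℝ] B)
    (n : ℕ) (hn : 1 ≤ n)
    (h : (BBim.iter ⟨B, l, r⟩ (n + 2)).H1Zero) :
    (BBim.iter ⟨B, l, r⟩ n).H1Zero := by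
  obtain ⟨m, rfl⟩ : ∃ m, n = m + 1 := ⟨n - 1, (Nat.succ_pred_eq_of_pos hn).symm⟩
  exact BBim.H1Zero.of_dual_dual_dual h

/-- if `H¹(A, B⁽ⁿ⁺²⁾) = 0` then `H¹(A, B⁽ⁿ⁾) = 0` (for `n ≥ 1`). -/
theorem stmt12 (A : Type u) [NonUnitalNormedRing A] [NormedSpace ℝ A]
    [IsScalarTower ℝ A A] [SMulCommClass ℝ A A] [CompleteSpace A]
    (B : Type v) [NormedAddCommGroup B] [NormedSpace ℝ B] [CompleteSpace B]
    (l : A →L[ℝ] B →L[ℝ] B) (r : B →L[ℝ] A →L[ℝ] B)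
    (hl : ∀ (a b : A) (x : B), l (a * b) x = l a (l b x))
    (hr : ∀ (x : B) (a b : A), r (r x a) b = r x (a * b))
    (hlr : ∀ (a : A) (x : B) (b : A), r (l a x) b = l a (r x b))
    (n : ℕ) (hn : 1 ≤ n)
    (h : (BBim.iter ⟨B, l, r⟩ (n + 2)).H1Zero) :
    (BBim.iter ⟨B, l, r⟩ n).H1Zero :=
  stmt12_general A B l r n hn h

end
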